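/- In the semi-infinite Weil complex $\mathcal W = \mathcal E\otimes\mathcal S$ of the Virasoro algebra, the BRST differential acts on generators by: $[Q,b] = L^{\mathcal W}$, $[Q,c] = :c\,\partial c:$, $[Q,\beta] = :c\,\partial\beta: + 2:\partial c\,\beta:$, and $[Q,\gamma] = :c\,\partial\gamma: - :\partial c\,\gamma:$. -/
import Mathlib


open scoped BigOperators

/-- Generalized binomial coefficient `m choose j` for an integer `m`, as a complex number. -/
noncomputable def zchoose (m : ℤ) (j : ℕ) : ℂ :=
  (∏ i ∈ Finset.range j, ((m : ℂ) - (i : ℂ))) / (Nat.factorial j : ℂ)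

/-- A vertex superalgebra presented via its circle products `∘ₙ`, in the sense of
Lian-Zuckerman (a commutative quantum operator algebra).  The parity grading is recorded by
the submodules `even`, `odd`; `comm_even`/`comm_odd` encode the Borcherds commutator formula
for the Fourier modes acting on the left regular module, and `iterate_even`/`iterate_odd`
encode the iterate (associativity) formula. -/
structure VA (V : Type) [AddCommGroup V] [Module ℂ V] where
  circ : ℤ → V →ₗ[ℂ] V →ₗ[ℂ] V
  one : V
  even : Submodule ℂ V
  odd : Submodule ℂ V
  one_even : one ∈ even
  circ_ee : ∀ (n : ℤ) {a b : V}, a ∈ even → b ∈ even → circ n a b ∈ even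
  circ_oo : ∀ (n : ℤ) {a b : V}, a ∈ odd → b ∈ odd → circ n a b ∈ even
  circ_eo : ∀ (n : ℤ) {a b : V}, a ∈ even → b ∈ odd → circ n a b ∈ odd
  circ_oe : ∀ (n : ℤ) {a b : V}, a ∈ odd → b ∈ even → circ n a b ∈ odd
  unit_left : ∀ (n : ℤ) (a : V), circ n one a = if n = -1 then a else 0
  unit_right_wick : ∀ a : V, circ (-1) a one = a
  unit_right_nonneg : ∀ (n : ℤ) (a : V), 0 ≤ n → circ n a one = 0
  truncate : ∀ a b : V, ∃ N : ℕ, ∀ n : ℤ, (N : ℤ) ≤ n → circ n a b = 0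
  comm_even : ∀ {a b : V}, (a ∈ even ∨ b ∈ even) → ∀ (m n : ℤ) (c : V),
    circ m a (circ n b c) - circ n b (circ m a c)
      = ∑ᶠ j : ℕ, zchoose m j • circ (m + n - (j : ℤ)) (circ (j : ℤ) a b) c
  comm_odd : ∀ {a b : V}, a ∈ odd → b ∈ odd → ∀ (m n : ℤ) (c : V),
    circ m a (circ n b c) + circ n b (circ m a c)
      = ∑ᶠ j : ℕ, zchoose m j • circ (m + n - (j : ℤ)) (circ (j : ℤ) a b) c
  iterate_even : ∀ {a b : V}, (a ∈ even ∨ b ∈ even) → ∀ (m n : ℤ) (c : V),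
    circ m (circ n a b) c
      = ∑ᶠ j : ℕ, ((-1 : ℂ) ^ j * zchoose n j) •
          (circ (n - (j : ℤ)) a (circ (m + (j : ℤ)) b c)
            - ((-1 : ℂ) ^ n) • circ (n + m - (j : ℤ)) b (circ (j : ℤ) a c))
  iterate_odd : ∀ {a b : V}, a ∈ odd → b ∈ odd → ∀ (m n : ℤ) (c : V),
    circ m (circ n a b) c
      = ∑ᶠ j : ℕ, ((-1 : ℂ) ^ j * zchoose n j) •
          (circ (n - (j : ℤ)) a (circ (m + (j : ℤ)) b c)
            + ((-1 : ℂ) ^ n) • circ (n + m - (j : ℤ)) b (circ (j : ℤ) a c))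

namespace VA

variable {V : Type} [AddCommGroup V] [Module ℂ V] (A : VA V)

/-- The formal derivative `∂a = a ∘₋₂ 1`. -/
def D (a : V) : V := A.circ (-2) a A.one

/-- The Wick (normally ordered) product `:ab: = a ∘₋₁ b`. -/
def wick (a b : V) : V := A.circ (-1) a b

end VA

namespace VA

/-- Iterated (right-normalized) Wick product of a list of elements. -/
def wlist {V : Type} [AddCommGroup V] [Module ℂ V] (A : VA V) : List V → V
  | [] => A.one
  | a :: l => A.wick a (wlist A l)

/-- Iterated Wick power. -/
def wpow {V : Type} [AddCommGroup V] [Module ℂ V] (A : VA V) (a : V) : ℕ → V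
  | 0 => A.one
  | k + 1 => A.wick a (wpow A a k)

end VA


section AuxLemmas

lemma zchoose_zero (m : ℤ) : zchoose m 0 = 1 := by
  simp [zchoose]

lemma cast_succ_ne_zero (j : ℕ) : ((j:ℂ) + 1) ≠ 0 := by
  have := Nat.cast_add_one_ne_zero (R := ℂ) j
  exact_mod_cast this

lemma zchoose_succ_mul (m : ℤ) (j : ℕ) :
    zchoose m (j+1) * ((j:ℂ)+1) = zchoose m j * ((m:ℂ) - j) := by
  have h1 : ((Nat.factorial j : ℂ)) ≠ 0 := by exact_mod_cast Nat.factorial_ne_zero j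
  have h2 := cast_succ_ne_zero j
  simp only [zchoose, Finset.prod_range_succ, Nat.factorial_succ]
  push_cast
  field_simp

lemma zchoose_neg_one (j : ℕ) : zchoose (-1) j = (-1)^j := by
  induction j with
  | zero => simp [zchoose_zero]
  | succ n ih =>
    have h2 := cast_succ_ne_zero n
    apply mul_right_cancel₀ h2
    rw [zchoose_succ_mul, ih, pow_succ]
    push_cast
    ring

lemma zchoose_neg_two (j : ℕ) : ((-1:ℂ))^j * zchoose (-2) j = (j:ℂ) + 1 := by
  induction j with
  | zero => simp [zchoose_zero]
  | succ n ih =>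
    have h2 := cast_succ_ne_zero n
    apply mul_right_cancel₀ h2
    have key : zchoose (-2) (n+1) * ((n:ℂ)+1) = zchoose (-2) n * ((-2:ℂ) - n) := by
      have := zchoose_succ_mul (-2) n
      push_cast at this ⊢
      linear_combination this
    push_cast
    calc (-1:ℂ)^(n+1) * zchoose (-2) (n+1) * ((n:ℂ)+1)
        = ((-1:ℂ)^(n+1)) * (zchoose (-2) (n+1) * ((n:ℂ)+1)) := by ring
      _ = ((-1:ℂ)^(n+1)) * (zchoose (-2) n * ((-2:ℂ) - n)) := by rw [key]
      _ = ((-1:ℂ)^n * zchoose (-2) n) * ((n:ℂ) + 2) := by rw [pow_succ]; ring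
      _ = ((n:ℂ)+1) * ((n:ℂ)+2) := by rw [ih]
      _ = ((n:ℂ)+1+1) * ((n:ℂ)+1) := by ring

lemma finsum_eq_range_two {M : Type*} [AddCommMonoid M] (f : ℕ → M)
    (h : ∀ j, 2 ≤ j → f j = 0) : ∑ᶠ j, f j = f 0 + f 1 := by
  rw [finsum_eq_finset_sum_of_support_subset f (s := Finset.range 2)]
  · rw [Finset.sum_range_succ, Finset.sum_range_one]
  · intro x hx
    simp only [Function.mem_support] at hx
    simp only [Finset.coe_range, Set.mem_Iio]
    by_contra hc
    exact hx (h x (by omega))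

namespace VA

variable {V : Type} [AddCommGroup V] [Module ℂ V] (A : VA V)

lemma circ_zero_right (n : ℤ) (a : V) : A.circ n a 0 = 0 := map_zero _

lemma circ_zero_left (n : ℤ) (x : V) : A.circ n 0 x = 0 := by
  rw [map_zero]; rfl

/-- Mode of a derivative. -/
lemma D_mode (a x : V) (m : ℤ) :
    A.circ m (A.D a) x = (-(m:ℂ)) • A.circ (m-1) a x := by
  have hiter := A.iterate_even (a := a) (b := A.one) (Or.inr A.one_even) m (-2) x
  rw [VA.D, hiter]
  have hz2 : ((-1:ℂ))^(-2:ℤ) = 1 := by norm_num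
  have hsummand : ∀ j : ℕ,
      ((-1 : ℂ) ^ j * zchoose (-2) j) •
        (A.circ (-2 - (j : ℤ)) a (A.circ (m + (j : ℤ)) A.one x)
          - ((-1 : ℂ) ^ (-2:ℤ)) • A.circ (-2 + m - (j : ℤ)) A.one (A.circ (j : ℤ) a x))
      = ((j:ℂ)+1) • ((if m + (j:ℤ) = -1 then A.circ (-2 - (j : ℤ)) a x else 0)
          - (if (-2:ℤ) + m - (j:ℤ) = -1 then A.circ (j : ℤ) a x else 0)) := by
    intro j
    rw [zchoose_neg_two, hz2, one_smul, A.unit_left, A.unit_left]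
    rw [apply_ite (A.circ (-2 - (j:ℤ)) a), map_zero]
  simp only [hsummand]
  rcases lt_trichotomy m 0 with hm | hm | hm
  · -- m < 0 : single at j = (-1-m).toNat
    rw [finsum_eq_single _ (-1-m).toNat]
    · have hj : (((-1-m).toNat : ℕ) : ℤ) = -1 - m := Int.toNat_of_nonneg (by omega)
      rw [if_pos (by omega), if_neg (by omega), sub_zero]
      have h1 : (-2 - (((-1-m).toNat : ℕ) : ℤ)) = m - 1 := by omega
      rw [h1]
      congr 1
      have hc : ((((-1-m).toNat : ℕ)) : ℂ) = -1 - (m:ℂ) := by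
        have := congrArg (Int.cast : ℤ → ℂ) hj
        push_cast at this
        exact this
      rw [hc]; ring
    · intro j hj
      rw [if_neg (by omega), if_neg (by omega), sub_zero, smul_zero]
  · -- m = 0
    subst hm
    rw [finsum_eq_zero_of_forall_eq_zero]
    · norm_num
    · intro j
      rw [if_neg (by omega), if_neg (by omega), sub_zero, smul_zero]
  · -- m > 0 : single at j = (m-1).toNat
    rw [finsum_eq_single _ (m-1).toNat]
    · have hj : (((m-1).toNat : ℕ) : ℤ) = m - 1 := Int.toNat_of_nonneg (by omega)
      rw [if_neg (by omega), if_pos (by omega), zero_sub, smul_neg]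
      rw [show (((m-1).toNat : ℕ) : ℤ) = m - 1 from hj]
      rw [← neg_smul]
      congr 1
      have hc : ((((m-1).toNat : ℕ)) : ℂ) = (m:ℂ) - 1 := by
        have := congrArg (Int.cast : ℤ → ℂ) hj
        push_cast at this
        exact this
      rw [hc]; ring
    · intro j hj
      rw [if_neg (by omega), if_neg (by omega), sub_zero, smul_zero]

end VA
end AuxLemmas
namespace VA
section Aux2
variable {V : Type} [AddCommGroup V] [Module ℂ V] (A : VA V)

lemma wick_mode_even {a b : V} (h : a ∈ A.even ∨ b ∈ A.even) (m : ℤ) (x : V) :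
    A.circ m (A.wick a b) x = ∑ᶠ j : ℕ,
      (A.circ (-1 - (j:ℤ)) a (A.circ (m + (j:ℤ)) b x)
        + A.circ (m - 1 - (j:ℤ)) b (A.circ (j:ℤ) a x)) := by
  rw [VA.wick, A.iterate_even h m (-1) x]
  apply finsum_congr; intro j
  rw [zchoose_neg_one, show ((-1:ℂ))^(-1:ℤ) = -1 from by norm_num,
    show ((-1:ℂ))^j * (-1:ℂ)^j = 1 from by rw [← mul_pow]; norm_num, one_smul,
    neg_smul, one_smul, sub_neg_eq_add,
    show (-1:ℤ) + m - (j:ℤ) = m - 1 - (j:ℤ) from by ring]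

lemma wick_mode_odd {a b : V} (ha : a ∈ A.odd) (hb : b ∈ A.odd) (m : ℤ) (x : V) :
    A.circ m (A.wick a b) x = ∑ᶠ j : ℕ,
      (A.circ (-1 - (j:ℤ)) a (A.circ (m + (j:ℤ)) b x)
        - A.circ (m - 1 - (j:ℤ)) b (A.circ (j:ℤ) a x)) := by
  rw [VA.wick, A.iterate_odd ha hb m (-1) x]
  apply finsum_congr; intro j
  rw [zchoose_neg_one, show ((-1:ℂ))^(-1:ℤ) = -1 from by norm_num,
    show ((-1:ℂ))^j * (-1:ℂ)^j = 1 from by rw [← mul_pow]; norm_num, one_smul,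
    neg_smul, one_smul, ← sub_eq_add_neg,
    show (-1:ℤ) + m - (j:ℤ) = m - 1 - (j:ℤ) from by ring]

lemma D_mode_nonneg {a x : V} (h : ∀ n : ℤ, 0 ≤ n → A.circ n a x = 0) :
    ∀ n : ℤ, 0 ≤ n → A.circ n (A.D a) x = 0 := by
  intro n hn
  rw [A.D_mode]
  rcases eq_or_lt_of_le hn with h0 | h0
  · rw [← h0]; norm_num
  · rw [h (n-1) (by omega), smul_zero]

lemma wick_mode_zero_even {a b x : V} (h : a ∈ A.even ∨ b ∈ A.even)
    (ha : ∀ n : ℤ, 0 ≤ n → A.circ n a x = 0) (hb : ∀ n : ℤ, 0 ≤ n → A.circ n b x = 0)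
    (m : ℤ) (hm : 0 ≤ m) : A.circ m (A.wick a b) x = 0 := by
  rw [A.wick_mode_even h]
  apply finsum_eq_zero_of_forall_eq_zero; intro j
  rw [hb (m + (j:ℤ)) (by omega), ha (j:ℤ) (by omega), A.circ_zero_right,
    A.circ_zero_right, add_zero]

lemma wick_mode_zero_odd {a b x : V} (ha' : a ∈ A.odd) (hb' : b ∈ A.odd)
    (ha : ∀ n : ℤ, 0 ≤ n → A.circ n a x = 0) (hb : ∀ n : ℤ, 0 ≤ n → A.circ n b x = 0)
    (m : ℤ) (hm : 0 ≤ m) : A.circ m (A.wick a b) x = 0 := by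
  rw [A.wick_mode_odd ha' hb']
  apply finsum_eq_zero_of_forall_eq_zero; intro j
  rw [hb (m + (j:ℤ)) (by omega), ha (j:ℤ) (by omega), A.circ_zero_right,
    A.circ_zero_right, sub_zero]

lemma wick_mode_right_even {a b x : V} (h : a ∈ A.even ∨ b ∈ A.even)
    (ha : ∀ n : ℤ, 0 ≤ n → A.circ n a x = 0) (m : ℤ) :
    A.circ m (A.wick a b) x
      = ∑ᶠ j : ℕ, A.circ (-1 - (j:ℤ)) a (A.circ (m + (j:ℤ)) b x) := by
  rw [A.wick_mode_even h]
  apply finsum_congr; intro j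
  rw [ha (j:ℤ) (by omega), A.circ_zero_right, add_zero]

lemma wick_mode_right_odd {a b x : V} (ha' : a ∈ A.odd) (hb' : b ∈ A.odd)
    (ha : ∀ n : ℤ, 0 ≤ n → A.circ n a x = 0) (m : ℤ) :
    A.circ m (A.wick a b) x
      = ∑ᶠ j : ℕ, A.circ (-1 - (j:ℤ)) a (A.circ (m + (j:ℤ)) b x) := by
  rw [A.wick_mode_odd ha' hb']
  apply finsum_congr; intro j
  rw [ha (j:ℤ) (by omega), A.circ_zero_right, sub_zero]

lemma wick_mode_left_even {a b x : V} (h : a ∈ A.even ∨ b ∈ A.even)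
    (hb : ∀ n : ℤ, 0 ≤ n → A.circ n b x = 0) (m : ℤ) (hm : 0 ≤ m) :
    A.circ m (A.wick a b) x
      = ∑ᶠ j : ℕ, A.circ (m - 1 - (j:ℤ)) b (A.circ (j:ℤ) a x) := by
  rw [A.wick_mode_even h]
  apply finsum_congr; intro j
  rw [hb (m + (j:ℤ)) (by omega), A.circ_zero_right, zero_add]

lemma wick_mode_left_odd {a b x : V} (ha' : a ∈ A.odd) (hb' : b ∈ A.odd)
    (hb : ∀ n : ℤ, 0 ≤ n → A.circ n b x = 0) (m : ℤ) (hm : 0 ≤ m) :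
    A.circ m (A.wick a b) x
      = ∑ᶠ j : ℕ, -(A.circ (m - 1 - (j:ℤ)) b (A.circ (j:ℤ) a x)) := by
  rw [A.wick_mode_odd ha' hb']
  apply finsum_congr; intro j
  rw [hb (m + (j:ℤ)) (by omega), A.circ_zero_right, zero_sub]

end Aux2
end VA
namespace VA
section Aux3
variable {V : Type} [AddCommGroup V] [Module ℂ V] (A : VA V)

lemma D_def (a : V) : A.circ (-2) a A.one = A.D a := rfl
lemma wick_def (a b : V) : A.circ (-1) a b = A.wick a b := rfl

lemma comm_zero_odd {a b : V} (ha : a ∈ A.odd) (hb : b ∈ A.odd) (m n : ℤ) (x : V)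
    (hz : ∀ j : ℕ, A.circ (m + n - (j:ℤ)) (A.circ (j:ℤ) a b) x = 0) :
    A.circ m a (A.circ n b x) = - A.circ n b (A.circ m a x) := by
  have h := A.comm_odd ha hb m n x
  rw [finsum_eq_zero_of_forall_eq_zero (fun j => by rw [hz j, smul_zero])] at h
  exact eq_neg_of_add_eq_zero_left h

lemma comm_zero_even {a b : V} (h : a ∈ A.even ∨ b ∈ A.even) (m n : ℤ) (x : V)
    (hz : ∀ j : ℕ, A.circ (m + n - (j:ℤ)) (A.circ (j:ℤ) a b) x = 0) :
    A.circ m a (A.circ n b x) = A.circ n b (A.circ m a x) := by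
  have h' := A.comm_even h m n x
  rw [finsum_eq_zero_of_forall_eq_zero (fun j => by rw [hz j, smul_zero])] at h'
  exact sub_eq_zero.mp h'

end Aux3
end VA
/-- In the semi-infinite Weil complex `𝒲 = ℰ ⊗ 𝒮` of the Virasoro
algebra, the BRST differential acts on generators by `[Q,b] = L^𝒲`, `[Q,c] = :c∂c:`,
`[Q,β] = :c∂β: + 2:∂c β:`, `[Q,γ] = :c∂γ: - :∂c γ:`. -/
theorem stmt9 (V : Type) [AddCommGroup V] [Module ℂ V] (A : VA V)
    (b c β γ : V)
    (hb : b ∈ A.odd) (hc : c ∈ A.odd)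
    (hbc0 : A.circ 0 b c = A.one) (hbc : ∀ n : ℤ, 1 ≤ n → A.circ n b c = 0)
    (hcb0 : A.circ 0 c b = A.one) (hcb : ∀ n : ℤ, 1 ≤ n → A.circ n c b = 0)
    (hbb : ∀ n : ℤ, 0 ≤ n → A.circ n b b = 0)
    (hcc : ∀ n : ℤ, 0 ≤ n → A.circ n c c = 0)
    (hβ : β ∈ A.even) (hγ : γ ∈ A.even)
    (hβγ0 : A.circ 0 β γ = A.one) (hβγ : ∀ n : ℤ, 1 ≤ n → A.circ n β γ = 0)
    (hγβ0 : A.circ 0 γ β = -A.one) (hγβ : ∀ n : ℤ, 1 ≤ n → A.circ n γ β = 0)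
    (hββ : ∀ n : ℤ, 0 ≤ n → A.circ n β β = 0)
    (hγγ : ∀ n : ℤ, 0 ≤ n → A.circ n γ γ = 0)
    (hcross : ∀ n : ℤ, 0 ≤ n →
      A.circ n b β = 0 ∧ A.circ n b γ = 0 ∧ A.circ n c β = 0 ∧ A.circ n c γ = 0 ∧
      A.circ n β b = 0 ∧ A.circ n γ b = 0 ∧ A.circ n β c = 0 ∧ A.circ n γ c = 0)
    (LS LE LW J : V)
    (hLS : LS = A.wick (A.D β) γ + (2 : ℂ) • A.wick β (A.D γ))
    (hLE : LE = -(A.wick (A.D b) c) - (2 : ℂ) • A.wick b (A.D c))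
    (hLW : LW = LE + LS)
    (hJ : J = A.wick (LS + (1 / 2 : ℂ) • LE) c + (3 / 4 : ℂ) • A.D (A.D c))
    :
    A.circ 0 J b = LW ∧
    A.circ 0 J c = A.wick c (A.D c) ∧
    A.circ 0 J β = A.wick c (A.D β) + (2 : ℂ) • A.wick (A.D c) β ∧
    A.circ 0 J γ = A.wick c (A.D γ) - A.wick (A.D c) γ := by
  -- parity facts
  have hDβ : A.D β ∈ A.even := A.circ_ee _ hβ A.one_even
  have hDγ : A.D γ ∈ A.even := A.circ_ee _ hγ A.one_even
  have hDb : A.D b ∈ A.odd := A.circ_oe _ hb A.one_even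
  have hDc : A.D c ∈ A.odd := A.circ_oe _ hc A.one_even
  have hLSe : LS ∈ A.even := by
    rw [hLS]
    exact add_mem (A.circ_ee _ hDβ hγ) (Submodule.smul_mem _ _ (A.circ_ee _ hβ hDγ))
  have hLEe : LE ∈ A.even := by
    rw [hLE]
    exact sub_mem (neg_mem (A.circ_oo _ hDb hc)) (Submodule.smul_mem _ _ (A.circ_oo _ hb hDc))
  have hKe : LS + (1/2:ℂ) • LE ∈ A.even :=
    add_mem hLSe (Submodule.smul_mem _ _ hLEe)
  -- cross-mode vanishing
  have hbβ : ∀ n : ℤ, 0 ≤ n → A.circ n b β = 0 := fun n hn => (hcross n hn).1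
  have hbγ : ∀ n : ℤ, 0 ≤ n → A.circ n b γ = 0 := fun n hn => (hcross n hn).2.1
  have hcβ : ∀ n : ℤ, 0 ≤ n → A.circ n c β = 0 := fun n hn => (hcross n hn).2.2.1
  have hcγ : ∀ n : ℤ, 0 ≤ n → A.circ n c γ = 0 := fun n hn => (hcross n hn).2.2.2.1
  have hβb : ∀ n : ℤ, 0 ≤ n → A.circ n β b = 0 := fun n hn => (hcross n hn).2.2.2.2.1
  have hγb : ∀ n : ℤ, 0 ≤ n → A.circ n γ b = 0 := fun n hn => (hcross n hn).2.2.2.2.2.1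
  have hβc : ∀ n : ℤ, 0 ≤ n → A.circ n β c = 0 := fun n hn => (hcross n hn).2.2.2.2.2.2.1
  have hγc : ∀ n : ℤ, 0 ≤ n → A.circ n γ c = 0 := fun n hn => (hcross n hn).2.2.2.2.2.2.2
  have hDbb := A.D_mode_nonneg hbb
  have hDcc := A.D_mode_nonneg hcc
  have hDββ := A.D_mode_nonneg hββ
  have hDγγ := A.D_mode_nonneg hγγ
  have hDβb := A.D_mode_nonneg hβb
  have hDγb := A.D_mode_nonneg hγb
  have hDβc := A.D_mode_nonneg hβc
  have hDγc := A.D_mode_nonneg hγc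
  have hDbβ := A.D_mode_nonneg hbβ
  have hDcβ := A.D_mode_nonneg hcβ
  have hDbγ := A.D_mode_nonneg hbγ
  have hDcγ := A.D_mode_nonneg hcγ
  -- LS-modes vanish on fermions; LE-modes vanish on bosons
  have hLSb : ∀ m : ℤ, 0 ≤ m → A.circ m LS b = 0 := by
    intro m hm
    rw [hLS, map_add, LinearMap.add_apply, map_smul, LinearMap.smul_apply,
      A.wick_mode_zero_even (Or.inl hDβ) hDβb hγb m hm,
      A.wick_mode_zero_even (Or.inl hβ) hβb hDγb m hm, smul_zero, add_zero]
  have hLSc : ∀ m : ℤ, 0 ≤ m → A.circ m LS c = 0 := by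
    intro m hm
    rw [hLS, map_add, LinearMap.add_apply, map_smul, LinearMap.smul_apply,
      A.wick_mode_zero_even (Or.inl hDβ) hDβc hγc m hm,
      A.wick_mode_zero_even (Or.inl hβ) hβc hDγc m hm, smul_zero, add_zero]
  have hLEβ : ∀ m : ℤ, 0 ≤ m → A.circ m LE β = 0 := by
    intro m hm
    rw [hLE, map_sub, LinearMap.sub_apply, map_neg, LinearMap.neg_apply,
      map_smul, LinearMap.smul_apply,
      A.wick_mode_zero_odd hDb hc hDbβ hcβ m hm,
      A.wick_mode_zero_odd hb hDc hbβ hDcβ m hm, smul_zero, neg_zero, sub_zero]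
  have hLEγ : ∀ m : ℤ, 0 ≤ m → A.circ m LE γ = 0 := by
    intro m hm
    rw [hLE, map_sub, LinearMap.sub_apply, map_neg, LinearMap.neg_apply,
      map_smul, LinearMap.smul_apply,
      A.wick_mode_zero_odd hDb hc hDbγ hcγ m hm,
      A.wick_mode_zero_odd hb hDc hbγ hDcγ m hm, smul_zero, neg_zero, sub_zero]
  -- modes of LE-components on b
  have hEb1 : ∀ m : ℤ, 0 ≤ m → A.circ m (A.wick (A.D b) c) b
      = if m = 0 then A.D b else 0 := by
    intro m hm
    rw [A.wick_mode_right_odd hDb hc hDbb]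
    rcases eq_or_ne m 0 with h0 | h0
    · subst h0
      rw [if_pos rfl, finsum_eq_single _ 0]
      · norm_num [hcb0, A.unit_right_wick]
      · intro j hj
        rw [hcb (0 + (j:ℤ)) (by omega), A.circ_zero_right]
    · rw [if_neg h0]
      apply finsum_eq_zero_of_forall_eq_zero
      intro j
      rw [hcb (m + (j:ℤ)) (by omega), A.circ_zero_right]
  have hEb2 : ∀ m : ℤ, 0 ≤ m → A.circ m (A.wick b (A.D c)) b
      = if m = 0 then -A.D b else if m = 1 then -b else 0 := by
    intro m hm
    rw [A.wick_mode_right_odd hb hDc hbb]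
    have hterm : ∀ j : ℕ, m + (j:ℤ) ≠ 1 →
        A.circ (-1 - (j:ℤ)) b (A.circ (m + (j:ℤ)) (A.D c) b) = 0 := by
      intro j hj
      rw [A.D_mode]
      rcases eq_or_ne (m + (j:ℤ)) 0 with h0 | h0
      · rw [h0]; norm_num
      · rw [hcb (m + (j:ℤ) - 1) (by omega), smul_zero, A.circ_zero_right]
    rcases eq_or_ne m 0 with h0 | h0
    · subst h0
      rw [if_pos rfl, finsum_eq_single _ 1]
      · rw [A.D_mode]
        norm_num [hcb0, map_smul, A.D_def]
      · intro j hj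
        exact hterm j (by omega)
    rcases eq_or_ne m 1 with h1 | h1
    · subst h1
      rw [if_neg h0, if_pos rfl, finsum_eq_single _ 0]
      · rw [A.D_mode]
        norm_num [hcb0, map_smul, A.unit_right_wick]
      · intro j hj
        exact hterm j (by omega)
    · rw [if_neg h0, if_neg h1]
      apply finsum_eq_zero_of_forall_eq_zero
      intro j
      exact hterm j (by omega)
  have hLEb : ∀ m : ℤ, 0 ≤ m → A.circ m LE b
      = if m = 0 then A.D b else if m = 1 then (2:ℂ) • b else 0 := by
    intro m hm
    rw [hLE, map_sub, LinearMap.sub_apply, map_neg, LinearMap.neg_apply,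
      map_smul, LinearMap.smul_apply, hEb1 m hm, hEb2 m hm]
    split_ifs
    · module
    · module
    · module
  -- modes of K = LS + ½ LE on b
  have hKb : ∀ m : ℤ, 0 ≤ m → A.circ m (LS + (1/2:ℂ) • LE) b
      = if m = 0 then (1/2:ℂ) • A.D b else if m = 1 then b else 0 := by
    intro m hm
    rw [map_add, LinearMap.add_apply, map_smul, LinearMap.smul_apply, hLSb m hm,
      hLEb m hm]
    split_ifs
    · module
    · module
    · module
  -- quasi-commutativity facts
  have hA1 : A.circ (-1) (A.D b) (A.circ (-1) c A.one)
      = - A.circ (-1) c (A.circ (-1) (A.D b) A.one) := by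
    apply A.comm_zero_odd hDb hc (-1) (-1) A.one
    intro j
    rw [A.D_mode]
    match j with
    | 0 => norm_num
    | 1 => norm_num [hbc0, map_smul, LinearMap.smul_apply, A.unit_left]
    | (n+2) =>
      rw [hbc (((n+2:ℕ):ℤ) - 1) (by push_cast; omega), smul_zero, A.circ_zero_left]
  have hQ1 : A.circ (-1) c (A.D b) = - A.circ (-1) (A.D b) c := by
    rw [A.unit_right_wick, A.unit_right_wick] at hA1
    rw [hA1, neg_neg]
  have hQ2 : A.circ (-1) b (A.D c) = - A.circ (-2) c b := by
    have h := A.comm_zero_odd hb hc (-1) (-2) A.one ?_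
    · rw [A.unit_right_wick] at h
      exact h
    · intro j
      match j with
      | 0 => norm_num [hbc0, A.unit_left]
      | (n+1) => rw [hbc ((n+1:ℕ):ℤ) (by push_cast; omega), A.circ_zero_left]
  -- Part 2 ingredients : modes on c
  have hEc1 : ∀ m : ℤ, 0 ≤ m → A.circ m (A.wick (A.D b) c) c
      = if m = 0 then A.D c else if m = 1 then c else 0 := by
    intro m hm
    rw [A.wick_mode_left_odd hDb hc hcc m hm]
    have hval : ∀ m' : ℤ, -(A.circ (m' - 1 - ((1:ℕ):ℤ)) c (A.circ ((1:ℕ):ℤ) (A.D b) c))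
        = A.circ (m' - 2) c A.one := by
      intro m'
      rw [A.D_mode]
      norm_num [hbc0, map_smul]
      rw [show m' - 1 - 1 = m' - 2 from by ring]
    have hterm : ∀ j : ℕ, j ≠ 1 →
        -(A.circ (m - 1 - (j:ℤ)) c (A.circ (j:ℤ) (A.D b) c)) = 0 := by
      intro j hj
      rw [A.D_mode]
      rcases Nat.eq_zero_or_pos j with h0 | h0
      · subst h0; norm_num
      · rw [hbc ((j:ℤ) - 1) (by omega), smul_zero, A.circ_zero_right, neg_zero]
    rw [finsum_eq_single _ 1 (fun j hj => hterm j hj), hval]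
    rcases eq_or_ne m 0 with h0 | h0
    · subst h0; rw [if_pos rfl]; exact A.D_def c
    rcases eq_or_ne m 1 with h1 | h1
    · subst h1; rw [if_neg h0, if_pos rfl]
      norm_num [A.unit_right_wick]
    · rw [if_neg h0, if_neg h1, A.unit_right_nonneg _ _ (by omega)]
  have hEc2 : ∀ m : ℤ, 0 ≤ m → A.circ m (A.wick b (A.D c)) c
      = if m = 0 then -A.D c else 0 := by
    intro m hm
    rw [A.wick_mode_left_odd hb hDc hDcc m hm]
    rw [finsum_eq_single _ 0 (fun j hj => by
      rw [hbc (j:ℤ) (by omega), A.circ_zero_right, neg_zero])]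
    simp only [Nat.cast_zero, sub_zero]
    rw [hbc0, A.D_mode, show m - 1 - 1 = m - 2 from by ring]
    rcases eq_or_ne m 0 with h0 | h0
    · subst h0; rw [if_pos rfl]; norm_num [A.D_def]
    rcases eq_or_ne m 1 with h1 | h1
    · subst h1; rw [if_neg h0]; norm_num
    · rw [if_neg h0, A.unit_right_nonneg (m-2) c (by omega), smul_zero, neg_zero]
  have hLEc : ∀ m : ℤ, 0 ≤ m → A.circ m LE c
      = if m = 0 then A.D c else if m = 1 then -c else 0 := by
    intro m hm
    rw [hLE, map_sub, LinearMap.sub_apply, map_neg, LinearMap.neg_apply,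
      map_smul, LinearMap.smul_apply, hEc1 m hm, hEc2 m hm]
    split_ifs
    · module
    · module
    · module
  have hKc : ∀ m : ℤ, 0 ≤ m → A.circ m (LS + (1/2:ℂ) • LE) c
      = if m = 0 then (1/2:ℂ) • A.D c else if m = 1 then -((1/2:ℂ) • c) else 0 := by
    intro m hm
    rw [map_add, LinearMap.add_apply, map_smul, LinearMap.smul_apply, hLSc m hm,
      hLEc m hm]
    split_ifs
    · module
    · module
    · module
  have hQ3 : A.circ (-2) c c = -A.circ (-1) c (A.D c) := by
    have h := A.comm_zero_odd hc hc (-1) (-2) A.one ?_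
    · rw [A.unit_right_wick] at h
      rw [show A.circ (-2) c A.one = A.D c from rfl] at h
      rw [h, neg_neg]
    · intro j
      rw [hcc (j:ℤ) (by omega), A.circ_zero_left]
  -- Part 3 ingredients : modes on β
  have hSβ1 : ∀ m : ℤ, 0 ≤ m → A.circ m (A.wick (A.D β) γ) β
      = if m = 0 then -A.D β else 0 := by
    intro m hm
    rw [A.wick_mode_right_even (Or.inl hDβ) hDββ]
    rcases eq_or_ne m 0 with h0 | h0
    · subst h0
      rw [if_pos rfl, finsum_eq_single _ 0 (fun j hj => by
        rw [hγβ (0 + (j:ℤ)) (by omega), A.circ_zero_right])]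
      simp only [Nat.cast_zero, add_zero, sub_zero]
      norm_num [hγβ0, map_neg, A.unit_right_wick]
    · rw [if_neg h0]
      apply finsum_eq_zero_of_forall_eq_zero
      intro j
      rw [hγβ (m + (j:ℤ)) (by omega), A.circ_zero_right]
  have hSβ2 : ∀ m : ℤ, 0 ≤ m → A.circ m (A.wick β (A.D γ)) β
      = if m = 0 then A.D β else if m = 1 then β else 0 := by
    intro m hm
    rw [A.wick_mode_right_even (Or.inl hβ) hββ]
    have hterm : ∀ j : ℕ, m + (j:ℤ) ≠ 1 →
        A.circ (-1 - (j:ℤ)) β (A.circ (m + (j:ℤ)) (A.D γ) β) = 0 := by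
      intro j hj
      rw [A.D_mode]
      rcases eq_or_ne (m + (j:ℤ)) 0 with h0 | h0
      · rw [h0]; norm_num
      · rw [hγβ (m + (j:ℤ) - 1) (by omega), smul_zero, A.circ_zero_right]
    rcases eq_or_ne m 0 with h0 | h0
    · subst h0
      rw [if_pos rfl, finsum_eq_single _ 1 (fun j hj => hterm j (by omega))]
      rw [A.D_mode]
      norm_num [hγβ0, map_smul, map_neg, A.D_def]
    rcases eq_or_ne m 1 with h1 | h1
    · subst h1
      rw [if_neg h0, if_pos rfl, finsum_eq_single _ 0 (fun j hj => hterm j (by omega))]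
      rw [A.D_mode]
      norm_num [hγβ0, map_smul, map_neg, A.unit_right_wick]
    · rw [if_neg h0, if_neg h1]
      exact finsum_eq_zero_of_forall_eq_zero (fun j => hterm j (by omega))
  have hKβ : ∀ m : ℤ, 0 ≤ m → A.circ m (LS + (1/2:ℂ) • LE) β
      = if m = 0 then A.D β else if m = 1 then (2:ℂ) • β else 0 := by
    intro m hm
    rw [map_add, LinearMap.add_apply, map_smul, LinearMap.smul_apply, hLEβ m hm,
      hLS, map_add, LinearMap.add_apply, map_smul, LinearMap.smul_apply,
      hSβ1 m hm, hSβ2 m hm]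
    split_ifs
    · module
    · module
    · module
  have hQ4 : A.circ (-2) c β = A.circ (-1) β (A.D c) := by
    have h := A.comm_zero_even (Or.inl hβ) (-1) (-2) A.one (fun j => by
      rw [hβc (j:ℤ) (by omega), A.circ_zero_left])
    rw [A.unit_right_wick] at h
    exact h.symm
  have hQ5 : A.circ (-1) (A.D c) β = A.circ (-1) β (A.D c) := by
    have h := A.comm_zero_even (Or.inr hβ) (-1) (-1) A.one (fun j => by
      rw [hDcβ (j:ℤ) (by omega), A.circ_zero_left])
    rw [A.unit_right_wick, A.unit_right_wick] at h
    exact h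
  -- Part 4 ingredients : modes on γ
  have hSγ1 : ∀ m : ℤ, 0 ≤ m → A.circ m (A.wick (A.D β) γ) γ
      = if m = 0 then -A.D γ else if m = 1 then -γ else 0 := by
    intro m hm
    rw [A.wick_mode_left_even (Or.inl hDβ) hγγ m hm]
    have hterm : ∀ j : ℕ, j ≠ 1 →
        A.circ (m - 1 - (j:ℤ)) γ (A.circ (j:ℤ) (A.D β) γ) = 0 := by
      intro j hj
      rw [A.D_mode]
      rcases Nat.eq_zero_or_pos j with h0 | h0
      · subst h0; norm_num
      · rw [hβγ ((j:ℤ) - 1) (by omega), smul_zero, A.circ_zero_right]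
    rw [finsum_eq_single _ 1 (fun j hj => hterm j hj)]
    rw [A.D_mode]
    simp only [Nat.cast_one]
    rw [show ((1:ℤ)) - 1 = 0 from by ring, hβγ0, show m - 1 - 1 = m - 2 from by ring]
    rcases eq_or_ne m 0 with h0 | h0
    · subst h0; rw [if_pos rfl]; norm_num [map_smul, A.D_def]
    rcases eq_or_ne m 1 with h1 | h1
    · subst h1; rw [if_neg h0, if_pos rfl]; norm_num [map_smul, A.unit_right_wick]
    · rw [if_neg h0, if_neg h1, map_smul, A.unit_right_nonneg (m-2) γ (by omega),
        smul_zero]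
  have hSγ2 : ∀ m : ℤ, 0 ≤ m → A.circ m (A.wick β (A.D γ)) γ
      = if m = 0 then A.D γ else 0 := by
    intro m hm
    rw [A.wick_mode_left_even (Or.inl hβ) hDγγ m hm]
    rw [finsum_eq_single _ 0 (fun j hj => by
      rw [hβγ (j:ℤ) (by omega), A.circ_zero_right])]
    simp only [Nat.cast_zero, sub_zero]
    rw [hβγ0, A.D_mode, show m - 1 - 1 = m - 2 from by ring]
    rcases eq_or_ne m 0 with h0 | h0
    · subst h0; rw [if_pos rfl]; norm_num [A.D_def]
    rcases eq_or_ne m 1 with h1 | h1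
    · subst h1; rw [if_neg h0]; norm_num
    · rw [if_neg h0, A.unit_right_nonneg (m-2) γ (by omega), smul_zero]
  have hKγ : ∀ m : ℤ, 0 ≤ m → A.circ m (LS + (1/2:ℂ) • LE) γ
      = if m = 0 then A.D γ else if m = 1 then -γ else 0 := by
    intro m hm
    rw [map_add, LinearMap.add_apply, map_smul, LinearMap.smul_apply, hLEγ m hm,
      hLS, map_add, LinearMap.add_apply, map_smul, LinearMap.smul_apply,
      hSγ1 m hm, hSγ2 m hm]
    split_ifs
    · module
    · module
    · module
  have hQ6 : A.circ (-2) c γ = A.circ (-1) γ (A.D c) := by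
    have h := A.comm_zero_even (Or.inl hγ) (-1) (-2) A.one (fun j => by
      rw [hγc (j:ℤ) (by omega), A.circ_zero_left])
    rw [A.unit_right_wick] at h
    exact h.symm
  have hQ7 : A.circ (-1) (A.D c) γ = A.circ (-1) γ (A.D c) := by
    have h := A.comm_zero_even (Or.inr hγ) (-1) (-1) A.one (fun j => by
      rw [hDcγ (j:ℤ) (by omega), A.circ_zero_left])
    rw [A.unit_right_wick, A.unit_right_wick] at h
    exact h
  have hQ2' : A.circ (-2) c b = -A.circ (-1) b (A.D c) := by rw [hQ2, neg_neg]
  refine ⟨?_, ?_, ?_, ?_⟩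
  · -- [Q, b] = LW
    rw [hJ, map_add, LinearMap.add_apply, map_smul, LinearMap.smul_apply,
      A.D_mode (A.D c) b 0]
    norm_num
    rw [A.wick_mode_even (Or.inl hKe) 0 b, finsum_eq_range_two]
    · have e0 := hLEb 0 le_rfl
      rw [if_pos rfl] at e0
      have e1 := hLEb 1 one_pos.le
      rw [if_neg one_ne_zero, if_pos rfl] at e1
      norm_num [hcb0, hcb 1 le_rfl, A.unit_right_wick, map_smul,
        hLSb 0 le_rfl, hLSb 1 one_pos.le, e0, e1]
      rw [hQ1, hQ2']
      rw [hLW, hLE, hLS]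
      simp only [VA.wick]
      module
    · intro j hj
      rw [hcb (0 + (j:ℤ)) (by omega), A.circ_zero_right,
        hKb (j:ℤ) (by omega), if_neg (by omega), if_neg (by omega),
        A.circ_zero_right, add_zero]
  · -- [Q, c] = :c ∂c:
    rw [hJ, map_add, LinearMap.add_apply, map_smul, LinearMap.smul_apply,
      A.D_mode (A.D c) c 0]
    norm_num
    rw [A.wick_mode_even (Or.inl hKe) 0 c, finsum_eq_range_two]
    · have e0 := hLEc 0 le_rfl
      rw [if_pos rfl] at e0
      have e1 := hLEc 1 one_pos.le
      rw [if_neg one_ne_zero, if_pos rfl] at e1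
      norm_num [hcc 0 le_rfl, hcc 1 one_pos.le, A.unit_right_wick, map_smul, map_neg,
        hLSc 0 le_rfl, hLSc 1 one_pos.le, e0, e1]
      rw [hQ3]
      simp only [VA.wick]
      module
    · intro j hj
      rw [hcc (0 + (j:ℤ)) (by omega), A.circ_zero_right,
        hKc (j:ℤ) (by omega), if_neg (by omega), if_neg (by omega),
        A.circ_zero_right, add_zero]
  · -- [Q, β] = :c ∂β: + 2 :∂c β:
    have s0 : A.circ 0 LS β = A.D β := by
      rw [hLS, map_add, LinearMap.add_apply, map_smul, LinearMap.smul_apply]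
      have u1 := hSβ1 0 le_rfl
      rw [if_pos rfl] at u1
      have u2 := hSβ2 0 le_rfl
      rw [if_pos rfl] at u2
      rw [u1, u2]; module
    have s1 : A.circ 1 LS β = (2:ℂ) • β := by
      rw [hLS, map_add, LinearMap.add_apply, map_smul, LinearMap.smul_apply]
      have u1 := hSβ1 1 one_pos.le
      rw [if_neg one_ne_zero] at u1
      have u2 := hSβ2 1 one_pos.le
      rw [if_neg one_ne_zero, if_pos rfl] at u2
      rw [u1, u2]; module
    rw [hJ, map_add, LinearMap.add_apply, map_smul, LinearMap.smul_apply,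
      A.D_mode (A.D c) β 0]
    norm_num
    rw [A.wick_mode_even (Or.inl hKe) 0 β, finsum_eq_range_two]
    · norm_num [hcβ 0 le_rfl, hcβ 1 one_pos.le, map_smul, s0, s1,
        hLEβ 0 le_rfl, hLEβ 1 one_pos.le, A.unit_right_wick]
      rw [hQ4, ← hQ5]
      simp only [VA.wick]
    · intro j hj
      rw [hcβ (0 + (j:ℤ)) (by omega), A.circ_zero_right,
        hKβ (j:ℤ) (by omega), if_neg (by omega), if_neg (by omega),
        A.circ_zero_right, add_zero]
  · -- [Q, γ] = :c ∂γ: - :∂c γ: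
    have t0 : A.circ 0 LS γ = A.D γ := by
      rw [hLS, map_add, LinearMap.add_apply, map_smul, LinearMap.smul_apply]
      have u1 := hSγ1 0 le_rfl
      rw [if_pos rfl] at u1
      have u2 := hSγ2 0 le_rfl
      rw [if_pos rfl] at u2
      rw [u1, u2]; module
    have t1 : A.circ 1 LS γ = -γ := by
      rw [hLS, map_add, LinearMap.add_apply, map_smul, LinearMap.smul_apply]
      have u1 := hSγ1 1 one_pos.le
      rw [if_neg one_ne_zero, if_pos rfl] at u1
      have u2 := hSγ2 1 one_pos.le
      rw [if_neg one_ne_zero] at u2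
      rw [u1, u2]; module
    rw [hJ, map_add, LinearMap.add_apply, map_smul, LinearMap.smul_apply,
      A.D_mode (A.D c) γ 0]
    norm_num
    rw [A.wick_mode_even (Or.inl hKe) 0 γ, finsum_eq_range_two]
    · norm_num [hcγ 0 le_rfl, hcγ 1 one_pos.le, map_smul, map_neg, t0, t1,
        hLEγ 0 le_rfl, hLEγ 1 one_pos.le, A.unit_right_wick]
      rw [hQ6, ← hQ7]
      simp only [VA.wick]
      module
    · intro j hj
      rw [hcγ (0 + (j:ℤ)) (by omega), A.circ_zero_right,
        hKγ (j:ℤ) (by omega), if_neg (by omega), if_neg (by omega),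
        A.circ_zero_right, add_zero]
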